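/- Let V be a finite set of nodes of a rooted tree with root r: there is a parent function par : V \ {r} → V such that iterating par from any node reaches r (the parent relation is well-founded with r as the unique root). Let g : V \ {r} → G assign each non-root node a group label, and call two non-root nodes siblings-in-group if they have the same parent and the same group label. Define m : V → ℕ recursively by m(v) = 1 if v has no children, and m(v) = Σ_{v' : par(v') = v} m(v') otherwise; assume m(v) ≥ 1 for all v. Define w : V → ℝ by w(r) = 1 and, for v ≠ r, w(v) = ( m(v) / Σ_{v' : par(v') = par(v), g(v') = g(v)} m(v') ) · w(par(v)). Then: (i) for every parent u and every group label appearing among u's children, Σ_{v : par(v) = u, g(v) = that label} w(v) = w(u); and (ii) for every v ∈ V, w(v) ≥ m(v)/m(r), and in particular w(v) ≥ 1/m(r). -/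
import Mathlib


open Finset

/-- the balanced strategy: on a finite rooted tree with parent function
`par`, subtree leaf-counts `m`, and group labels `g` on the non-root nodes, the weights
`w` defined by `w(r) = 1` and
`w(v) = (m(v) / ∑_{v' sibling-in-group of v} m(v')) · w(par(v))` satisfy:
(i) within every nonempty group of children of a node `u`, the weights sum to `w(u)`; and
(ii) `w(v) ≥ m(v)/m(r) ≥ 1/m(r)` for every node `v`. -/
theorem stmt_8
    {V G : Type*} [Fintype V] [DecidableEq V] [DecidableEq G]
    (r : V) (par : V → V)
    (hreach : ∀ v : V, ∃ k : ℕ, par^[k] v = r)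
    (g : V → G)
    (m : V → ℕ)
    (hm_leaf : ∀ v : V, (¬ ∃ v', v' ≠ r ∧ par v' = v) → m v = 1)
    (hm_node : ∀ v : V, (∃ v', v' ≠ r ∧ par v' = v) →
        m v = ∑ v' ∈ Finset.univ.filter (fun v' => v' ≠ r ∧ par v' = v), m v')
    (hm_pos : ∀ v : V, 1 ≤ m v)
    (w : V → ℝ)
    (hw_root : w r = 1)
    (hw : ∀ v : V, v ≠ r →
        w v = ((m v : ℝ) /
            ∑ v' ∈ Finset.univ.filter
              (fun v' => v' ≠ r ∧ par v' = par v ∧ g v' = g v), (m v' : ℝ)) * w (par v)) :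
    -- (i) within each group of children of `u`, the weights sum to `w(u)`
    (∀ u : V, ∀ lab : G, (∃ v, v ≠ r ∧ par v = u ∧ g v = lab) →
        ∑ v ∈ Finset.univ.filter (fun v => v ≠ r ∧ par v = u ∧ g v = lab), w v = w u) ∧
    -- (ii) every node has weight at least m(v)/m(r), hence at least 1/m(r)
    (∀ v : V, (m v : ℝ) / (m r : ℝ) ≤ w v ∧ 1 / (m r : ℝ) ≤ w v) := by
  have hmr : (0:ℝ) < (m r : ℝ) := by exact_mod_cast hm_pos r
  -- basic facts about the group sum
  have hgroup : ∀ v : V, v ≠ r →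
      (m v : ℝ) ≤ (∑ v' ∈ Finset.univ.filter
        (fun v' => v' ≠ r ∧ par v' = par v ∧ g v' = g v), (m v' : ℝ)) ∧
      (∑ v' ∈ Finset.univ.filter
        (fun v' => v' ≠ r ∧ par v' = par v ∧ g v' = g v), (m v' : ℝ)) ≤ (m (par v) : ℝ) := by
    intro v hv
    constructor
    · apply Finset.single_le_sum (f := fun v' => (m v' : ℝ))
      · intro i _; positivity
      · simp [hv]
    · have h1 : m (par v) = ∑ v' ∈ Finset.univ.filter (fun v' => v' ≠ r ∧ par v' = par v), m v' :=
        hm_node (par v) ⟨v, hv, rfl⟩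
      have h2 : (Finset.univ.filter (fun v' => v' ≠ r ∧ par v' = par v ∧ g v' = g v)) ⊆
          (Finset.univ.filter (fun v' => v' ≠ r ∧ par v' = par v)) := by
        intro x hx
        simp only [Finset.mem_filter] at hx ⊢
        exact ⟨hx.1, hx.2.1, hx.2.2.1⟩
      calc (∑ v' ∈ Finset.univ.filter
            (fun v' => v' ≠ r ∧ par v' = par v ∧ g v' = g v), (m v' : ℝ))
          ≤ ∑ v' ∈ Finset.univ.filter (fun v' => v' ≠ r ∧ par v' = par v), (m v' : ℝ) := by
            apply Finset.sum_le_sum_of_subset_of_nonneg h2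
            intro i _ _; positivity
        _ = (m (par v) : ℝ) := by rw [h1]; push_cast; ring
  have hSpos : ∀ v : V, v ≠ r →
      (0:ℝ) < ∑ v' ∈ Finset.univ.filter
        (fun v' => v' ≠ r ∧ par v' = par v ∧ g v' = g v), (m v' : ℝ) := by
    intro v hv
    have := (hgroup v hv).1
    have hmv : (0:ℝ) < (m v : ℝ) := by exact_mod_cast hm_pos v
    linarith
  -- part (ii) by induction on depth
  have part2 : ∀ n : ℕ, ∀ v : V, par^[n] v = r → (m v : ℝ) / (m r : ℝ) ≤ w v := by
    intro n
    induction n with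
    | zero => intro v hv; simp only [Function.iterate_zero, id_eq] at hv
              subst hv; rw [hw_root, div_self (ne_of_gt hmr)]
    | succ k ih =>
      intro v hv
      by_cases hvr : v = r
      · subst hvr; rw [hw_root, div_self (ne_of_gt hmr)]
      · have hpar : par^[k] (par v) = r := by
          rw [Function.iterate_succ_apply] at hv; exact hv
        have hwp := ih (par v) hpar
        have hS := hSpos v hvr
        have ⟨hg1, hg2⟩ := hgroup v hvr
        have hmv : (0:ℝ) < (m v : ℝ) := by exact_mod_cast hm_pos v
        rw [hw v hvr]
        have hwpnn : (m (par v) : ℝ) / (m r : ℝ) ≤ w (par v) := hwp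
        calc (m v : ℝ) / (m r : ℝ)
            ≤ ((m v : ℝ) / (∑ v' ∈ Finset.univ.filter
              (fun v' => v' ≠ r ∧ par v' = par v ∧ g v' = g v), (m v' : ℝ)))
              * ((m (par v) : ℝ) / (m r : ℝ)) := by
              rw [div_mul_div_comm, div_le_div_iff₀ hmr (by positivity)]
              nlinarith [mul_le_mul_of_nonneg_left hg2 hmv.le, hmr.le]
          _ ≤ _ := mul_le_mul_of_nonneg_left hwp (by positivity)
  have part2' : ∀ v : V, (m v : ℝ) / (m r : ℝ) ≤ w v ∧ 1 / (m r : ℝ) ≤ w v := by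
    intro v
    obtain ⟨k, hk⟩ := hreach v
    have h := part2 k v hk
    refine ⟨h, le_trans ?_ h⟩
    gcongr
    exact_mod_cast hm_pos v
  refine ⟨?_, part2'⟩
  -- part (i)
  rintro u lab ⟨v₀, hv₀r, hv₀p, hv₀g⟩
  set s := Finset.univ.filter (fun v => v ≠ r ∧ par v = u ∧ g v = lab) with hs
  have hv₀s : v₀ ∈ s := by simp [hs, hv₀r, hv₀p, hv₀g]
  have hSpos' : (0:ℝ) < ∑ v ∈ s, (m v : ℝ) := by
    apply Finset.sum_pos _ ⟨v₀, hv₀s⟩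
    intro i _
    exact_mod_cast hm_pos i
  have heq : ∀ v ∈ s, w v = ((m v : ℝ) / ∑ v' ∈ s, (m v' : ℝ)) * w u := by
    intro v hv
    simp only [hs, Finset.mem_filter] at hv
    obtain ⟨-, hvr, hvp, hvg⟩ := hv
    rw [hw v hvr, hvp, hvg]
  rw [Finset.sum_congr rfl heq, ← Finset.sum_mul, ← Finset.sum_div,
    div_self (ne_of_gt hSpos'), one_mul]
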